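/- For ℓ + p = n, the number of 3-TASEP complete configurations of length n with exactly ℓ neutral columns equals ((ℓ+1)/(n+1)) * binomial(2n+2, n−ℓ). -/

import Mathlib

open Finset

-- Cells contain `some true` = black, `some false` = white, `none` = neutral.

/-- Number of black particles among the first `j` columns (both rows). -/
def bC (n : ℕ) (ω : Fin n × Bool → Option Bool) (j : ℕ) : ℕ :=
  ((Finset.univ : Finset (Fin n × Bool)).filter
    (fun p => p.1.val < j ∧ ω p = some true)).card

/-- Number of white particles among the first `j` columns (both rows). -/
def wC (n : ℕ) (ω : Fin n × Bool → Option Bool) (j : ℕ) : ℕ :=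
  ((Finset.univ : Finset (Fin n × Bool)).filter
    (fun p => p.1.val < j ∧ ω p = some false)).card

/-- A 3-TASEP complete configuration: neutral particles occupy full columns; the
black/white blocks between consecutive neutral columns are balanced (equal numbers
of black and white particles) and prefix-positive.  Equivalently: the prefix
difference `bC - wC` is nonnegative everywhere, vanishes at the right end, and
vanishes at the wall before every neutral column. -/
def IsComplete3 (n : ℕ) (ω : Fin n × Bool → Option Bool) : Prop :=
  (∀ i : Fin n, (ω (i, true) = none ↔ ω (i, false) = none)) ∧
  bC n ω n = wC n ω n ∧
  (∀ j ≤ n, wC n ω j ≤ bC n ω j) ∧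
  (∀ i : Fin n, ω (i, true) = none → bC n ω i.val = wC n ω i.val)

instance (n : ℕ) : DecidablePred (IsComplete3 n) := fun ω => by
  unfold IsComplete3; infer_instance

/-- Number of neutral columns. -/
def neutCount (n : ℕ) (ω : Fin n × Bool → Option Bool) : ℕ :=
  ((Finset.univ : Finset (Fin n)).filter (fun i => ω (i, true) = none)).card

/-- Number of black particles in the top row. -/
def topB (n : ℕ) (ω : Fin n × Bool → Option Bool) : ℕ :=
  ((Finset.univ : Finset (Fin n)).filter (fun i => ω (i, true) = some true)).card

/-- Number of white particles in the top row. -/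
def topW (n : ℕ) (ω : Fin n × Bool → Option Bool) : ℕ :=
  ((Finset.univ : Finset (Fin n)).filter (fun i => ω (i, true) = some false)).card


def cnt : ℕ → ℕ → ℕ → ℕ
  | H, 0, l => if H = 0 ∧ l = 0 then 1 else 0
  | H, n+1, l =>
    2 * cnt H n l + cnt (H+2) n l +
      (if H = 0 then
        (match l with
          | 0 => 0
          | Nat.succ l' => cnt 0 n l')
       else if 2 ≤ H then cnt (H-2) n l else 0)

def cntX0 (n : ℕ) : ℕ → ℕ
  | 0 => 0
  | Nat.succ l' => cnt 0 n l'

def cntX (n l H : ℕ) : ℕ :=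
  if H = 0 then cntX0 n l else if 2 ≤ H then cnt (H-2) n l else 0

lemma cnt_succ (H n l : ℕ) :
    cnt H (n+1) l = 2 * cnt H n l + cnt (H+2) n l + cntX n l H := by
  rcases l with _ | l' <;> rfl

lemma cntZero : ∀ (n h l : ℕ), n < h + l → cnt (2*h) n l = 0 := by
  intro n
  induction n with
  | zero =>
    intro h l hlt
    simp only [cnt, ite_eq_right_iff, and_imp]
    intro h0 l0; omega
  | succ n IH =>
    intro h l hlt
    rw [cnt_succ]
    have t1 : cnt (2*h) n l = 0 := IH h l (by omega)
    have t2 : cnt (2*h+2) n l = 0 := by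
      rw [show 2*h+2 = 2*(h+1) by ring]; exact IH (h+1) l (by omega)
    have t3 : cntX n l (2*h) = 0 := by
      rcases Nat.eq_zero_or_pos h with hh | hh
      · subst hh
        rcases l with _ | l'
        · omega
        · show cntX n (l'+1) (2*0) = 0
          have := IH 0 l' (by omega)
          simpa [cntX, cntX0] using this
      · have hne : 2*h ≠ 0 := by omega
        simp only [cntX, if_neg hne, if_pos (show 2 ≤ 2*h by omega)]
        rw [show 2*h-2 = 2*(h-1) by omega]
        exact IH (h-1) l (by omega)
    omega

lemma bident (a r : ℕ) :
    (a+r+2) * ((a+1) * Nat.choose (2*a+2*r+6) (r+2))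
      = (a+r+3) * (2*((a+1) * Nat.choose (2*a+2*r+4) (r+1))
          + (a+2) * Nat.choose (2*a+2*r+4) r
          + a * Nat.choose (2*a+2*r+4) (r+2)) := by
  have hp : Nat.choose (2*a+2*r+6) (r+2)
      = Nat.choose (2*a+2*r+4) r + 2 * Nat.choose (2*a+2*r+4) (r+1)
        + Nat.choose (2*a+2*r+4) (r+2) := by
    rw [show 2*a+2*r+6 = (2*a+2*r+4)+1+1 from by ring,
        Nat.choose_succ_succ (2*a+2*r+4+1) (r+1),
        Nat.choose_succ_succ (2*a+2*r+4) r, Nat.choose_succ_succ (2*a+2*r+4) (r+1)]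
    ring
  have h1 := Nat.choose_succ_right_eq (2*a+2*r+4) (r+1)
  have h2 := Nat.choose_succ_right_eq (2*a+2*r+4) r
  rw [show 2*a+2*r+4 - (r+1) = 2*a+r+3 from by omega] at h1
  rw [show 2*a+2*r+4 - r = 2*a+r+4 from by omega] at h2
  rw [hp]
  zify at h1 h2 ⊢
  linear_combination h1 + h2

lemma cntX_val (n h l : ℕ)
    (IH : ∀ h' l' : ℕ, h' + l' ≤ n →
      (n+1) * cnt (2*h') n l' = (h'+l'+1) * Nat.choose (2*n+2) (n - l' - h'))
    (hle : h + l ≤ n+1) :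
    (n+1) * cntX n l (2*h) = (h+l) * Nat.choose (2*n+2) (n+1-l-h) := by
  rcases Nat.eq_zero_or_pos h with hh | hh
  · subst hh
    rcases l with _ | l'
    · simp [cntX, cntX0]
    · have : cntX n (l'+1) (2*0) = cnt 0 n l' := by simp [cntX, cntX0]
      rw [this]
      have h2 := IH 0 l' (by omega)
      rw [show (2*0 : ℕ) = 0 from rfl] at h2
      rw [h2, show n - l' - 0 = n+1-(l'+1)-0 from by omega,
         show 0+l'+1 = 0+(l'+1) from by omega]
  · have hne : 2*h ≠ 0 := by omega
    simp only [cntX, if_neg hne, if_pos (show 2 ≤ 2*h by omega)]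
    rw [show 2*h-2 = 2*(h-1) by omega]
    rw [IH (h-1) l (by omega), show n - l - (h-1) = n+1-l-h from by omega]
    congr 1
    omega

lemma cntFormula : ∀ (n h l : ℕ), h + l ≤ n →
    (n+1) * cnt (2*h) n l = (h+l+1) * Nat.choose (2*n+2) (n - l - h) := by
  intro n
  induction n with
  | zero =>
    intro h l hle
    have h0 : h = 0 := by omega
    have l0 : l = 0 := by omega
    subst h0; subst l0
    simp [cnt]
  | succ n IH =>
    intro h l hle
    rw [cnt_succ]
    have hX := cntX_val n h l IH (by omega)
    rcases (show h + l = n + 1 ∨ h + l = n ∨ h + l + 1 ≤ n by omega) with hc | hc | hc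
    · -- top case
      have t1 : cnt (2*h) n l = 0 := cntZero n h l (by omega)
      have t2 : cnt (2*h+2) n l = 0 := by
        rw [show 2*h+2 = 2*(h+1) by ring]; exact cntZero n (h+1) l (by omega)
      have hXv : cntX n l (2*h) = 1 := by
        apply Nat.eq_of_mul_eq_mul_left (show 0 < n+1 by omega)
        rw [hX, show n+1-l-h = 0 by omega, Nat.choose_zero_right, hc]
      rw [t1, t2, hXv, show n+1-l-h = 0 by omega, Nat.choose_zero_right]
      omega
    · -- middle case
      have t1 : cnt (2*h) n l = 1 := by
        apply Nat.eq_of_mul_eq_mul_left (show 0 < n+1 by omega)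
        rw [IH h l (by omega), show n-l-h = 0 by omega, Nat.choose_zero_right, hc]
      have t2 : cnt (2*h+2) n l = 0 := by
        rw [show 2*h+2 = 2*(h+1) by ring]; exact cntZero n (h+1) l (by omega)
      have hXv : cntX n l (2*h) = 2*n := by
        apply Nat.eq_of_mul_eq_mul_left (show 0 < n+1 by omega)
        rw [hX, show n+1-l-h = 1 by omega, Nat.choose_one_right, hc]
        ring
      rw [t1, t2, hXv, show n+1-l-h = 1 by omega, Nat.choose_one_right, hc]
      ring
    · -- generic case
      obtain ⟨r, hr⟩ : ∃ r, n = h + l + 1 + r := ⟨n - h - l - 1, by omega⟩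
      have t1 := IH h l (by omega)
      have t2' := IH (h+1) l (by omega)
      rw [show 2*(h+1) = 2*h+2 by ring] at t2'
      rw [show n - l - h = r+1 by omega] at t1
      rw [show n - l - (h+1) = r by omega] at t2'
      rw [show n+1-l-h = r+2 by omega] at hX
      apply Nat.eq_of_mul_eq_mul_left (show 0 < n+1 by omega)
      have expand : (n+1) * ((n+1+1) * (2 * cnt (2*h) n l + cnt (2*h+2) n l + cntX n l (2*h)))
          = (n+2) * (2*((n+1) * cnt (2*h) n l) + ((n+1) * cnt (2*h+2) n l)
              + ((n+1) * cntX n l (2*h))) := by ring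
      rw [expand, t1, t2', hX]
      rw [show n+1-l-h = r+2 by omega]
      have B := bident (h+l) r
      rw [show 2*(h+l)+2*r+6 = 2*(n+1)+2 by omega, show 2*(h+l)+2*r+4 = 2*n+2 by omega,
          show h+l+r+2 = n+1 by omega, show h+l+r+3 = n+2 by omega] at B
      zify at B ⊢
      linear_combination -B

open Finset

abbrev Col := Option Bool × Option Bool

def colB (c : Col) : ℕ :=
  (if c.1 = some true then 1 else 0) + (if c.2 = some true then 1 else 0)

def colW (c : Col) : ℕ :=
  (if c.1 = some false then 1 else 0) + (if c.2 = some false then 1 else 0)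

def okb : (n : ℕ) → ℕ → (Fin n → Col) → Bool
  | 0, H, _ => decide (H = 0)
  | n+1, H, κ =>
    decide ((κ 0).1 = none ↔ (κ 0).2 = none) &&
    decide (κ 0 = (none, none) → H = 0) &&
    decide (colW (κ 0) ≤ H + colB (κ 0)) &&
    okb n (H + colB (κ 0) - colW (κ 0)) (Fin.tail κ)

def bCnt (n : ℕ) (κ : Fin n → Col) (j : ℕ) : ℕ :=
  ∑ i : Fin n, if i.val < j then colB (κ i) else 0

def wCnt (n : ℕ) (κ : Fin n → Col) (j : ℕ) : ℕ :=
  ∑ i : Fin n, if i.val < j then colW (κ i) else 0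

lemma bCnt_zero (n : ℕ) (κ : Fin n → Col) : bCnt n κ 0 = 0 := by simp [bCnt]
lemma wCnt_zero (n : ℕ) (κ : Fin n → Col) : wCnt n κ 0 = 0 := by simp [wCnt]

lemma bCnt_succ {n : ℕ} (κ : Fin (n+1) → Col) (j : ℕ) :
    bCnt (n+1) κ (j+1) = colB (κ 0) + bCnt n (Fin.tail κ) j := by
  rw [bCnt, Fin.sum_univ_succ]
  simp [bCnt, Fin.tail, Nat.succ_lt_succ_iff]

lemma wCnt_succ {n : ℕ} (κ : Fin (n+1) → Col) (j : ℕ) :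
    wCnt (n+1) κ (j+1) = colW (κ 0) + wCnt n (Fin.tail κ) j := by
  rw [wCnt, Fin.sum_univ_succ]
  simp [wCnt, Fin.tail, Nat.succ_lt_succ_iff]

def ChP (n H : ℕ) (κ : Fin n → Col) : Prop :=
  (∀ i, ((κ i).1 = none ↔ (κ i).2 = none)) ∧
  (∀ j ≤ n, wCnt n κ j ≤ H + bCnt n κ j) ∧
  (H + bCnt n κ n = wCnt n κ n) ∧
  (∀ i : Fin n, κ i = (none, none) → H + bCnt n κ i.val = wCnt n κ i.val)

lemma okb_iff : ∀ (n H : ℕ) (κ : Fin n → Col), okb n H κ = true ↔ ChP n H κ := by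
  intro n
  induction n with
  | zero =>
    intro H κ
    simp only [okb, decide_eq_true_eq, ChP]
    constructor
    · intro hH
      subst hH
      exact ⟨fun i => i.elim0, fun j hj => by simp [bCnt, wCnt],
        by simp [bCnt, wCnt], fun i => i.elim0⟩
    · rintro ⟨-, -, h3, -⟩
      simp [bCnt, wCnt] at h3
      exact h3
  | succ n IH =>
    intro H κ
    have hbs : ∀ j, bCnt (n+1) κ (j+1) = colB (κ 0) + bCnt n (Fin.tail κ) j :=
      fun j => bCnt_succ κ j
    have hws : ∀ j, wCnt (n+1) κ (j+1) = colW (κ 0) + wCnt n (Fin.tail κ) j :=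
      fun j => wCnt_succ κ j
    have hb1 : bCnt (n+1) κ 1 = colB (κ 0) := by simpa [bCnt_zero] using hbs 0
    have hw1 : wCnt (n+1) κ 1 = colW (κ 0) := by simpa [wCnt_zero] using hws 0
    simp only [okb, Bool.and_eq_true, decide_eq_true_eq]
    rw [IH]
    constructor
    · rintro ⟨⟨⟨hv0, hnn0⟩, hle0⟩, ⟨tv, tle, tend, tnn⟩⟩
      refine ⟨?_, ?_, ?_, ?_⟩
      · intro i
        refine Fin.cases ?_ ?_ i
        · exact hv0
        · intro i; exact tv i
      · intro j hj
        rcases j with _ | j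
        · simp [wCnt_zero]
        · have := tle j (by omega)
          rw [hbs j, hws j]
          omega
      · have := tend
        rw [hbs n, hws n]
        omega
      · intro i
        refine Fin.cases ?_ ?_ i
        · intro hi0
          have := hnn0 hi0
          rw [show ((0 : Fin (n+1)).val) = 0 from rfl, bCnt_zero, wCnt_zero]
          omega
        · intro i hi
          have := tnn i hi
          rw [Fin.val_succ, hbs i.val, hws i.val]
          omega
    · rintro ⟨v, le, endc, nn⟩
      have hv0 := v 0
      have hle0 : colW (κ 0) ≤ H + colB (κ 0) := by
        have h1 := le 1 (by omega)
        rw [hb1, hw1] at h1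
        exact h1
      have hnn0 : κ 0 = (none, none) → H = 0 := by
        intro e
        have := nn 0 e
        rw [show ((0 : Fin (n+1)).val) = 0 from rfl, bCnt_zero, wCnt_zero] at this
        omega
      refine ⟨⟨⟨hv0, hnn0⟩, hle0⟩, ⟨fun i => v i.succ, ?_, ?_, ?_⟩⟩
      · intro j hj
        have := le (j+1) (by omega)
        rw [hbs j, hws j] at this
        omega
      · have := endc
        rw [hbs n, hws n] at this
        omega
      · intro i hi
        have := nn i.succ hi
        rw [Fin.val_succ, hbs i.val, hws i.val] at this
        omega

def countNN (n : ℕ) (κ : Fin n → Col) : ℕ :=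
  ((Finset.univ : Finset (Fin n)).filter
    (fun i => κ i = ((none : Option Bool), (none : Option Bool)))).card

lemma countNN_cons (n : ℕ) (c : Col) (t : Fin n → Col) :
    countNN (n+1) (Fin.cons c t)
      = (if c = ((none : Option Bool), (none : Option Bool)) then 1 else 0) + countNN n t := by
  rw [countNN, Finset.card_filter, Fin.sum_univ_succ, countNN, Finset.card_filter]
  simp [Fin.cons_zero, Fin.cons_succ]

lemma okb_cons (n H : ℕ) (c : Col) (t : Fin n → Col) :
    okb (n+1) H (Fin.cons c t)
      = (decide (c.1 = none ↔ c.2 = none) &&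
         decide (c = (none, none) → H = 0) &&
         decide (colW c ≤ H + colB c) &&
         okb n (H + colB c - colW c) t) := by
  simp only [okb, Fin.cons_zero, Fin.tail_cons]

lemma card_step {n : ℕ} (P : (Fin (n+1) → Col) → Prop) [DecidablePred P] :
    ((Finset.univ : Finset (Fin (n+1) → Col)).filter P).card
      = ∑ c : Col, ((Finset.univ : Finset (Fin n → Col)).filter
          (fun t => P (Fin.cons c t))).card := by
  rw [Finset.card_filter,
    ← Equiv.sum_comp (Fin.consEquiv (fun _ : Fin (n+1) => Col))
      (fun κ => if P κ then 1 else 0),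
    Fintype.sum_prod_type]
  refine Finset.sum_congr rfl fun c _ => ?_
  rw [Finset.card_filter]
  refine Finset.sum_congr rfl fun t _ => ?_
  rfl

lemma count_eq : ∀ (n H l : ℕ),
    ((Finset.univ : Finset (Fin n → Col)).filter
      (fun κ => okb n H κ = true ∧ countNN n κ = l)).card = cnt H n l := by
  intro n
  induction n with
  | zero =>
    intro H l
    rw [show cnt H 0 l = if H = 0 ∧ l = 0 then 1 else 0 from rfl]
    have hNN : ∀ κ : Fin 0 → Col, countNN 0 κ = 0 := fun κ => by simp [countNN]
    by_cases hH : H = 0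
    · by_cases hl : l = 0
      · rw [if_pos ⟨hH, hl⟩]
        rw [Finset.filter_true_of_mem (fun κ _ => ⟨by simp [okb, hH], by rw [hNN, hl]⟩)]
        simp
      · rw [if_neg (by tauto)]
        rw [Finset.card_eq_zero, Finset.filter_eq_empty_iff]
        intro κ _
        rw [hNN]
        tauto
    · rw [if_neg (by tauto)]
      rw [Finset.card_eq_zero, Finset.filter_eq_empty_iff]
      intro κ _
      simp [okb, hH]
  | succ n IH =>
    intro H l
    rw [card_step]
    have key : ∀ c : Col,
        ((Finset.univ : Finset (Fin n → Col)).filter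
          (fun t => okb (n+1) H (Fin.cons c t) = true ∧ countNN (n+1) (Fin.cons c t) = l)).card
        = (if (c.1 = none ↔ c.2 = none) then
            (if c = ((none : Option Bool), (none : Option Bool)) then
              (if H = 0 then cntX0 n l else 0)
             else (if colW c ≤ H + colB c then cnt (H + colB c - colW c) n l else 0))
           else 0) := by
      intro c
      rcases c with ⟨o1, o2⟩
      rcases o1 with _ | b1
      · rcases o2 with _ | b2
        · -- neutral column
          rw [if_pos (by simp), if_pos rfl]
          by_cases hH : H = 0
          · rw [if_pos hH]
            rcases l with _ | l'
            · rw [show cntX0 n 0 = 0 from rfl, Finset.card_eq_zero, Finset.filter_eq_empty_iff]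
              intro t _
              rw [countNN_cons]
              simp
            · rw [show cntX0 n (l'+1) = cnt 0 n l' from rfl, ← IH 0 l']
              refine congrArg Finset.card (Finset.filter_congr ?_)
              intro t _
              rw [okb_cons, countNN_cons]
              simp [colB, colW, hH]
              intro _
              omega
          · rw [if_neg hH, Finset.card_eq_zero, Finset.filter_eq_empty_iff]
            intro t _
            rw [okb_cons]
            simp [hH]
        · -- invalid (none, some)
          rw [if_neg (by simp), Finset.card_eq_zero, Finset.filter_eq_empty_iff]
          intro t _
          rw [okb_cons]
          simp
      · rcases o2 with _ | b2
        · -- invalid (some, none)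
          rw [if_neg (by simp), Finset.card_eq_zero, Finset.filter_eq_empty_iff]
          intro t _
          rw [okb_cons]
          simp
        · -- two particles
          rw [if_pos (by simp), if_neg (by simp)]
          by_cases hcw : colW ((some b1 : Option Bool), (some b2 : Option Bool)) ≤
              H + colB ((some b1 : Option Bool), (some b2 : Option Bool))
          · rw [if_pos hcw, ← IH _ l]
            refine congrArg Finset.card (Finset.filter_congr ?_)
            intro t _
            rw [okb_cons, countNN_cons]
            simp [hcw]
          · rw [if_neg hcw, Finset.card_eq_zero, Finset.filter_eq_empty_iff]
            intro t _
            rw [okb_cons]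
            simp [hcw]
    rw [Finset.sum_congr rfl (fun c _ => key c)]
    rw [Fintype.sum_prod_type]
    rw [Fintype.sum_option]
    simp only [Fintype.sum_option, Fintype.sum_bool]
    simp [colB, colW]
    rw [cnt_succ]
    simp only [cntX]
    split_ifs <;> omega

def toCol (n : ℕ) (ω : Fin n × Bool → Option Bool) : Fin n → Col :=
  fun i => (ω (i, true), ω (i, false))

def fromCol (n : ℕ) (κ : Fin n → Col) : Fin n × Bool → Option Bool :=
  fun p => if p.2 then (κ p.1).1 else (κ p.1).2

lemma bC_eq (n : ℕ) (ω : Fin n × Bool → Option Bool) (j : ℕ) :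
    bC n ω j = bCnt n (toCol n ω) j := by
  rw [bC, Finset.card_filter, Fintype.sum_prod_type, bCnt]
  refine Finset.sum_congr rfl fun i _ => ?_
  rw [Fintype.sum_bool]
  by_cases hij : (i : ℕ) < j
  · simp [toCol, colB, hij]; split_ifs <;> simp_all
  · simp [hij]

lemma wC_eq (n : ℕ) (ω : Fin n × Bool → Option Bool) (j : ℕ) :
    wC n ω j = wCnt n (toCol n ω) j := by
  rw [wC, Finset.card_filter, Fintype.sum_prod_type, wCnt]
  refine Finset.sum_congr rfl fun i _ => ?_
  rw [Fintype.sum_bool]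
  by_cases hij : (i : ℕ) < j
  · simp [toCol, colW, hij]; split_ifs <;> simp_all
  · simp [hij]

lemma neut_eq (n : ℕ) (ω : Fin n × Bool → Option Bool)
    (hv : ∀ i : Fin n, (ω (i, true) = none ↔ ω (i, false) = none)) :
    neutCount n ω = countNN n (toCol n ω) := by
  rw [neutCount, countNN]
  congr 1
  apply Finset.filter_congr
  intro i _
  simp only [toCol, Prod.mk.injEq]
  exact ⟨fun h => ⟨h, (hv i).mp h⟩, fun h => h.1⟩

lemma complete_iff (n : ℕ) (ω : Fin n × Bool → Option Bool) :
    IsComplete3 n ω ↔ ChP n 0 (toCol n ω) := by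
  rw [IsComplete3, ChP]
  constructor
  · rintro ⟨h1, h2, h3, h4⟩
    refine ⟨h1, ?_, ?_, ?_⟩
    · intro j hj
      have := h3 j hj
      rw [bC_eq n ω, wC_eq n ω] at this
      omega
    · have := h2
      rw [bC_eq n ω, wC_eq n ω] at this
      omega
    · intro i hi
      have hnone : ω (i, true) = none := congrArg Prod.fst hi
      have := h4 i hnone
      rw [bC_eq n ω, wC_eq n ω] at this
      omega
  · rintro ⟨h1, h2, h3, h4⟩
    refine ⟨h1, ?_, ?_, ?_⟩
    · rw [bC_eq n ω, wC_eq n ω]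
      omega
    · intro j hj
      have := h2 j hj
      rw [bC_eq n ω, wC_eq n ω]
      omega
    · intro i hi
      have hcol : toCol n ω i = ((none : Option Bool), (none : Option Bool)) := by
        have h2' : ω (i, false) = none := (h1 i).mp hi
        show (ω (i, true), ω (i, false)) = (none, none)
        rw [hi, h2']
      have := h4 i hcol
      rw [bC_eq n ω, wC_eq n ω]
      omega

lemma fromCol_toCol (n : ℕ) (ω : Fin n × Bool → Option Bool) :
    fromCol n (toCol n ω) = ω := by
  funext p
  rcases p with ⟨i, b⟩
  cases b <;> rfl

lemma toCol_fromCol (n : ℕ) (κ : Fin n → Col) :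
    toCol n (fromCol n κ) = κ := by
  funext i
  show (fromCol n κ (i, true), fromCol n κ (i, false)) = κ i
  simp [fromCol]

lemma card_transfer (n l : ℕ) :
    ((Finset.univ : Finset (Fin n × Bool → Option Bool)).filter
        (fun ω => IsComplete3 n ω ∧ neutCount n ω = l)).card
    = ((Finset.univ : Finset (Fin n → Col)).filter
        (fun κ => okb n 0 κ = true ∧ countNN n κ = l)).card := by
  refine Finset.card_bij' (fun ω _ => toCol n ω) (fun κ _ => fromCol n κ) ?_ ?_ ?_ ?_
  · intro ω hω
    rw [Finset.mem_filter] at hω ⊢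
    obtain ⟨-, hc, hl⟩ := hω
    refine ⟨Finset.mem_univ _, ?_, ?_⟩
    · rw [okb_iff]
      exact (complete_iff n ω).mp hc
    · rw [← neut_eq n ω hc.1]
      exact hl
  · intro κ hκ
    rw [Finset.mem_filter] at hκ ⊢
    obtain ⟨-, ho, hl⟩ := hκ
    have hchar := (okb_iff n 0 κ).mp ho
    refine ⟨Finset.mem_univ _, ?_, ?_⟩
    · rw [complete_iff, toCol_fromCol]
      exact hchar
    · rw [neut_eq n _ (fun i => by
          have := hchar.1 i
          exact this), toCol_fromCol]
      exact hl
  · intro ω hω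
    exact fromCol_toCol n ω
  · intro κ hκ
    exact toCol_fromCol n κ

/-- For `ℓ + p = n`, the number of 3-TASEP complete configurations of length `n`
with exactly `ℓ` neutral columns equals `((ℓ+1)/(n+1)) * binomial (2n+2) (n-ℓ)`. -/
theorem stmt5 (n ℓ p : ℕ) (h : ℓ + p = n) :
    ((Finset.univ : Finset (Fin n × Bool → Option Bool)).filter
        (fun ω => IsComplete3 n ω ∧ neutCount n ω = ℓ)).card * (n + 1)
      = (ℓ + 1) * Nat.choose (2 * n + 2) (n - ℓ) := by
  have hln : ℓ ≤ n := by omega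
  rw [card_transfer, count_eq]
  have hf := cntFormula n 0 ℓ (by omega)
  rw [show (2*0 : ℕ) = 0 from rfl] at hf
  rw [show (0+ℓ+1 : ℕ) = ℓ+1 from by omega] at hf
  rw [show (n - ℓ - 0 : ℕ) = n - ℓ from rfl] at hf
  rw [mul_comm]
  exact hf
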